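/- arXiv:1603.08504 — 2 statements merged into one kernel-verified Lean document; each statement's English description precedes it below -/
import Mathlib

section
/- Let α > 0 and β > 1 be real numbers. Then the inequality 𝔼_{α,β+1}(z) ≤ [𝔼_{α,β}(z)]^{β/(β−1)} holds for all real z ≥ 0, where the power is a real power of the positive number 𝔼_{α,β}(z). -/
/-- The Mittag-Leffler function `E_{α,β}(z) = ∑_{n=0}^∞ z^n / Γ(α n + β)`. -/
noncomputable def mittagLeffler (α β z : ℝ) : ℝ :=
  ∑' n : ℕ, z ^ n / Real.Gamma (α * n + β)

/-- The normalized Mittag-Leffler function `𝔼_{α,β}(z) = Γ(β) E_{α,β}(z)`. -/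
noncomputable def mittagLefflerNorm (α β z : ℝ) : ℝ :=
  Real.Gamma β * mittagLeffler α β z

/-!
Since `β / (αn + β) ≤ 1`, the coefficients `Γ(β + 1) / Γ(αn + β + 1)` of `𝔼_{α,β+1}` are bounded
by the coefficients `Γ(β) / Γ(αn + β)` of `𝔼_{α,β}`, so `𝔼_{α,β+1}(z) ≤ 𝔼_{α,β}(z)` for `z ≥ 0`.
The series `𝔼_{α,β}(z)` has constant term `1` and nonnegative terms, so it is at least `1`, and
raising it to the exponent `β / (β - 1) ≥ 1` can only increase it. Convergence of the series
follows from the ratio test, the ratio of consecutive terms being at most `|z| / (αn + β - 1)^α`.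
-/

open Real Filter Topology

/-- Compare the slopes of `log ∘ Γ` over `[x - 1, x]` and `[x, x + a]`; the first is `log (x - 1)`. -/
theorem Real.rpow_mul_Gamma_le_Gamma_add {x a : ℝ} (hx : 1 < x) (ha : 0 < a) :
    (x - 1) ^ a * Gamma x ≤ Gamma (x + a) := by
  have hx₁ : 0 < x - 1 := by linarith
  have hΓx : 0 < Gamma x := Gamma_pos_of_pos (by linarith)
  have hslope := convexOn_log_Gamma.slope_mono_adjacent (Set.mem_Ioi.2 hx₁)
    (Set.mem_Ioi.2 (by linarith : 0 < x + a)) (by linarith : x - 1 < x) (by linarith : x < x + a)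
  have hrec : Gamma x = (x - 1) * Gamma (x - 1) := by simpa using Gamma_add_one hx₁.ne'
  have hstep : log (Gamma x) - log (Gamma (x - 1)) = log (x - 1) := by
    rw [hrec, log_mul hx₁.ne' (Gamma_pos_of_pos hx₁).ne']
    ring
  simp only [Function.comp_apply, hstep, sub_sub_cancel, div_one, add_sub_cancel_left,
    le_div_iff₀ ha] at hslope
  calc (x - 1) ^ a * Gamma x = exp (log (x - 1) * a + log (Gamma x)) := by
        rw [exp_add, exp_log hΓx, rpow_def_of_pos hx₁]
    _ ≤ exp (log (Gamma (x + a))) := exp_le_exp.2 (by linarith)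
    _ = Gamma (x + a) := exp_log (Gamma_pos_of_pos (by linarith))

theorem Real.Gamma_add_one_div_Gamma_add_le {β t : ℝ} (hβ : 0 < β) (ht : 0 ≤ t) :
    Gamma (β + 1) / Gamma (t + (β + 1)) ≤ Gamma β / Gamma (t + β) := by
  have htβ : 0 < t + β := by linarith
  have hratio : 0 ≤ Gamma β / Gamma (t + β) :=
    div_nonneg (Gamma_pos_of_pos hβ).le (Gamma_pos_of_pos htβ).le
  rw [← add_assoc, Gamma_add_one hβ.ne', Gamma_add_one htβ.ne', mul_div_mul_comm]
  exact mul_le_of_le_one_left hratio ((div_le_one htβ).2 (by linarith))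

theorem summable_mittagLeffler {α : ℝ} (hα : 0 < α) (β z : ℝ) :
    Summable (fun n : ℕ => z ^ n / Gamma (α * n + β)) := by
  have hgrow : Tendsto (fun n : ℕ => α * n + β) atTop atTop :=
    tendsto_atTop_add_const_right _ _ (tendsto_natCast_atTop_atTop.const_mul_atTop hα)
  have hratio : Tendsto (fun n : ℕ => |z| * (α * n + β - 1) ^ (-α)) atTop (𝓝 0) := by
    simpa [sub_eq_add_neg] using ((tendsto_rpow_neg_atTop hα).comp
      (tendsto_atTop_add_const_right _ (-1) hgrow)).const_mul |z|
  refine summable_of_ratio_norm_eventually_le one_half_lt_one ?_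
  filter_upwards [hgrow.eventually_gt_atTop 1, hratio.eventually_le_const one_half_pos]
    with n hx hr
  set x := α * n + β
  have hΓ : 0 < Gamma x := Gamma_pos_of_pos (by linarith)
  have hpow : 0 < (x - 1) ^ α := rpow_pos_of_pos (by linarith) _
  have hsucc : α * ((n + 1 : ℕ) : ℝ) + β = x + α := by push_cast; ring
  rw [rpow_neg (by linarith)] at hr
  simp only [hsucc, norm_div, norm_pow, Real.norm_eq_abs, abs_of_pos hΓ,
    abs_of_pos (Gamma_pos_of_pos (by linarith : 0 < x + α))]
  calc |z| ^ (n + 1) / Gamma (x + α)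
      ≤ |z| ^ (n + 1) / ((x - 1) ^ α * Gamma x) := by
        gcongr
        exact rpow_mul_Gamma_le_Gamma_add hx hα
    _ = |z| * ((x - 1) ^ α)⁻¹ * (|z| ^ n / Gamma x) := by
        field_simp
        ring
    _ ≤ 1 / 2 * (|z| ^ n / Gamma x) := by gcongr

theorem mittagLefflerNorm_eq_tsum (α β z : ℝ) :
    mittagLefflerNorm α β z = ∑' n : ℕ, z ^ n * (Gamma β / Gamma (α * n + β)) := by
  simp only [mittagLefflerNorm, mittagLeffler, ← tsum_mul_left, mul_div_left_comm]

theorem summable_mittagLefflerNorm {α : ℝ} (hα : 0 < α) (β z : ℝ) :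
    Summable (fun n : ℕ => z ^ n * (Gamma β / Gamma (α * n + β))) := by
  simpa only [mul_div_left_comm] using (summable_mittagLeffler hα β z).mul_left (Gamma β)

theorem mittagLefflerNorm_add_one_le {α β z : ℝ} (hα : 0 < α) (hβ : 0 < β) (hz : 0 ≤ z) :
    mittagLefflerNorm α (β + 1) z ≤ mittagLefflerNorm α β z := by
  rw [mittagLefflerNorm_eq_tsum, mittagLefflerNorm_eq_tsum]
  refine (summable_mittagLefflerNorm hα _ z).tsum_le_tsum (fun n => ?_)
    (summable_mittagLefflerNorm hα β z)
  exact mul_le_mul_of_nonneg_left (Gamma_add_one_div_Gamma_add_le hβ (by positivity))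
    (pow_nonneg hz n)

theorem one_le_mittagLefflerNorm {α β z : ℝ} (hα : 0 < α) (hβ : 0 < β) (hz : 0 ≤ z) :
    1 ≤ mittagLefflerNorm α β z := by
  rw [mittagLefflerNorm_eq_tsum]
  calc (1 : ℝ) = z ^ 0 * (Gamma β / Gamma (α * (0 : ℕ) + β)) := by
        simp [(Gamma_pos_of_pos hβ).ne']
    _ ≤ _ := (summable_mittagLefflerNorm hα β z).le_tsum 0 fun n _ => by
        have := Gamma_pos_of_pos (by positivity : 0 < α * n + β)
        positivity

/-- Lazarević-type inequality for the normalized Mittag-Leffler function. -/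
theorem mittagLefflerNorm_lazarevic_special (α β : ℝ) (hα : 0 < α) (hβ : 1 < β) :
    ∀ z : ℝ, 0 ≤ z →
      mittagLefflerNorm α (β + 1) z ≤ (mittagLefflerNorm α β z) ^ (β / (β - 1)) := by
  intro z hz
  have hβ₀ : 0 < β := by linarith
  have hexp : 1 ≤ β / (β - 1) := (one_le_div (by linarith)).2 (by linarith)
  calc mittagLefflerNorm α (β + 1) z ≤ mittagLefflerNorm α β z :=
        mittagLefflerNorm_add_one_le hα hβ₀ hz
    _ = mittagLefflerNorm α β z ^ (1 : ℝ) := (rpow_one _).symm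
    _ ≤ mittagLefflerNorm α β z ^ (β / (β - 1)) :=
        rpow_le_rpow_of_exponent_le (one_le_mittagLefflerNorm hα hβ₀ hz) hexp
end

section
/- Let α > 0, β > 0, γ > 0 be real numbers and n ∈ ℕ. Then the Turán type inequality ((n+1)(γ+n+2))/((n+2)(γ+n+1)) · [Γ(β+α(n+2))]² / (Γ(β+α(n+1))·Γ(β+α(n+3))) · [E^{γ,1,n+1}_{α,β}(z)]² ≤ E^{γ,1,n}_{α,β}(z) · E^{γ,1,n+2}_{α,β}(z) holds for all z > 0. -/
/-- The generalized Mittag-Leffler function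
`E^{γ,q}_{α,β}(z) = ∑_{n=0}^∞ (γ)_{qn} z^n / (n! Γ(α n + β))`,
where `(γ)_s = Γ(γ+s)/Γ(γ)` is the Pochhammer symbol. -/
noncomputable def genMittagLeffler (α β γ q z : ℝ) : ℝ :=
  ∑' n : ℕ, (Real.Gamma (γ + q * n) / Real.Gamma γ) * z ^ n /
    (n.factorial * Real.Gamma (α * n + β))

/-- The `n`-th remainder of the generalized Mittag-Leffler series with `q = 1`:
`E^{γ,1,n}_{α,β}(z) = ∑_{k=n+1}^∞ (γ)_k z^k / (k! Γ(α k + β))`. -/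
noncomputable def genMittagLefflerRem (α β γ : ℝ) (n : ℕ) (z : ℝ) : ℝ :=
  ∑' k : ℕ, (Real.Gamma (γ + (n + 1 + k)) / Real.Gamma γ) * z ^ (n + 1 + k) /
    ((n + 1 + k).factorial * Real.Gamma (α * (n + 1 + k) + β))

/-! Write `T_k` for the terms of the series. For `K ≥ n + 1` the quotient `T_K T_{K+2} / T_{K+1}²`
splits into a Pochhammer factor, bounded below by `(n+1)(γ+n+2)/((n+2)(γ+n+1))`, and the Gamma
factor `Γ(x+α)² / (Γ(x) Γ(x+2α))` at `x = αK + β`, which does not decrease when `x` grows by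
`α`, because `log Γ` has nonpositive third differences (read off Euler's product for `Γ`). So
the constant of the inequality times `T_{K+1}²` is at most `T_K T_{K+2}`, and the Cauchy–Schwarz
inequality for series passes this from the terms to the remainders. -/

open Filter Finset Topology

lemma tsum_sq_le_tsum_mul_tsum_of_sq_le_mul {ι : Type*} {r f g : ι → ℝ}
    (hf : ∀ i, 0 ≤ f i) (hg : ∀ i, 0 ≤ g i) (hfs : Summable f) (hgs : Summable g)
    (h : ∀ i, r i ^ 2 ≤ f i * g i) : (∑' i, r i) ^ 2 ≤ (∑' i, f i) * ∑' i, g i := by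
  have hrs : Summable r := by
    refine .of_norm_bounded ((hfs.add hgs).div_const 2) fun i => ?_
    rw [Real.norm_eq_abs, abs_le]
    constructor <;> nlinarith [h i, hf i, hg i, sq_nonneg (f i - g i)]
  exact le_of_tendsto_of_tendsto' (hrs.hasSum.pow 2) (Tendsto.mul hfs.hasSum hgs.hasSum) fun s =>
    sum_sq_le_sum_mul_sum_of_sq_le_mul s (fun i _ => hf i) (fun i _ => hg i) fun i _ => h i

namespace Real

lemma GammaSeq_third_difference_le {x h : ℝ} (hx : 0 < x) (hh : 0 ≤ h) {m : ℕ} (hm : m ≠ 0) :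
    GammaSeq (x + 3 * h) m * GammaSeq (x + h) m ^ 3 ≤
      GammaSeq (x + 2 * h) m ^ 3 * GammaSeq x m := by
  have hm' : (0 : ℝ) < m := by positivity
  have hpow : (m : ℝ) ^ (x + 3 * h) * ((m : ℝ) ^ (x + h)) ^ 3 =
      ((m : ℝ) ^ (x + 2 * h)) ^ 3 * (m : ℝ) ^ x := by
    simp only [← rpow_natCast, ← rpow_mul hm'.le, ← rpow_add hm']
    ring_nf
  -- `log (u + j)` has nonnegative third differences in `u`
  have hprod : (∏ j ∈ range (m + 1), (x + 2 * h + j)) ^ 3 * ∏ j ∈ range (m + 1), (x + j) ≤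
      (∏ j ∈ range (m + 1), (x + 3 * h + j)) * (∏ j ∈ range (m + 1), (x + h + j)) ^ 3 := by
    simp only [← prod_pow, ← prod_mul_distrib]
    refine prod_le_prod (fun j _ => by positivity) fun j _ => ?_
    have hu : 0 ≤ x + j := by positivity
    nlinarith [mul_nonneg hu (pow_nonneg hh 3), pow_nonneg hh 4]
  simp only [GammaSeq, div_pow, div_mul_div_comm, mul_pow]
  calc _ = (m : ℝ) ^ (x + 3 * h) * ((m : ℝ) ^ (x + h)) ^ 3 * (m.factorial : ℝ) ^ 4 /
        ((∏ j ∈ range (m + 1), (x + 3 * h + j)) * (∏ j ∈ range (m + 1), (x + h + j)) ^ 3) := by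
          ring
    _ ≤ ((m : ℝ) ^ (x + 2 * h)) ^ 3 * (m : ℝ) ^ x * (m.factorial : ℝ) ^ 4 /
        ((∏ j ∈ range (m + 1), (x + 2 * h + j)) ^ 3 * ∏ j ∈ range (m + 1), (x + j)) := by
          rw [hpow]
          exact div_le_div_of_nonneg_left (by positivity) (by positivity) hprod
    _ = _ := by ring

lemma Gamma_third_difference_le {x h : ℝ} (hx : 0 < x) (hh : 0 ≤ h) :
    Gamma (x + 3 * h) * Gamma (x + h) ^ 3 ≤ Gamma (x + 2 * h) ^ 3 * Gamma x :=
  le_of_tendsto_of_tendsto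
    ((GammaSeq_tendsto_Gamma _).mul ((GammaSeq_tendsto_Gamma _).pow 3))
    (((GammaSeq_tendsto_Gamma _).pow 3).mul (GammaSeq_tendsto_Gamma _))
    ((eventually_ne_atTop 0).mono fun _ hm => GammaSeq_third_difference_le hx hh hm)

noncomputable def gammaTuranRatio (h x : ℝ) : ℝ :=
  Gamma (x + h) ^ 2 / (Gamma x * Gamma (x + 2 * h))

lemma gammaTuranRatio_le_add {h x : ℝ} (hx : 0 < x) (hh : 0 ≤ h) :
    gammaTuranRatio h x ≤ gammaTuranRatio h (x + h) := by
  unfold gammaTuranRatio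
  rw [show x + h + h = x + 2 * h by ring, show x + h + 2 * h = x + 3 * h by ring,
    div_le_div_iff₀ (by positivity) (by positivity)]
  linear_combination Gamma_third_difference_le hx hh

lemma monotone_gammaTuranRatio_nat {α β : ℝ} (hα : 0 ≤ α) (hβ : 0 < β) :
    Monotone fun m : ℕ => gammaTuranRatio α (α * m + β) :=
  monotone_nat_of_le_succ fun m => by
    push_cast
    rw [mul_add_one, add_right_comm]
    exact gammaTuranRatio_le_add (by positivity) hα

lemma Gamma_mul_rpow_le_Gamma_add {x a : ℝ} (hx : 1 < x) (ha : 0 < a) :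
    Gamma x * (x - 1) ^ a ≤ Gamma (x + a) := by
  have hx1 : 0 < x - 1 := by linarith
  have hslope := convexOn_log_Gamma.slope_mono_adjacent (Set.mem_Ioi.2 hx1)
    (Set.mem_Ioi.2 (by linarith : 0 < x + a)) (sub_one_lt x) (lt_add_of_pos_right x ha)
  have hlog : log (Gamma x) - log (Gamma (x - 1)) = log (x - 1) := by
    have hrec : Gamma x = (x - 1) * Gamma (x - 1) := by simpa using Gamma_add_one hx1.ne'
    rw [hrec, log_mul hx1.ne' (by positivity)]
    ring
  simp only [Function.comp_apply, hlog, sub_sub_cancel, div_one, add_sub_cancel_left,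
    le_div_iff₀ ha] at hslope
  rw [← log_le_log_iff (by positivity) (by positivity), log_mul (by positivity) (by positivity),
    log_rpow hx1]
  linarith

lemma tendsto_Gamma_div_Gamma_add_atTop {a : ℝ} (ha : 0 < a) :
    Tendsto (fun x => Gamma x / Gamma (x + a)) atTop (𝓝 0) := by
  have hlim : Tendsto (fun x : ℝ => (x - 1) ^ (-a)) atTop (𝓝 0) :=
    (tendsto_rpow_neg_atTop ha).comp (tendsto_atTop_add_const_right _ (-1) tendsto_id)
  refine tendsto_of_tendsto_of_tendsto_of_le_of_le' tendsto_const_nhds hlim ?_ ?_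
  · filter_upwards [eventually_gt_atTop 0] with x hx
    positivity
  · filter_upwards [eventually_gt_atTop 1] with x hx
    have hx1 : 0 < x - 1 := by linarith
    rw [rpow_neg hx1.le, ← one_div, div_le_div_iff₀ (by positivity) (by positivity), one_mul]
    exact Gamma_mul_rpow_le_Gamma_add hx ha

end Real

namespace GenMittagLeffler

open Real

noncomputable def term (α β γ z : ℝ) (m : ℕ) : ℝ :=
  Gamma (γ + m) / Gamma γ * z ^ m / (m.factorial * Gamma (α * m + β))

/-- `(γ)_K (γ)_{K+2} / (γ)_{K+1}²` divided by `K! (K+2)! / (K+1)!²`. -/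
noncomputable def pochhammerTuranRatio (γ : ℝ) (K : ℕ) : ℝ :=
  (K + 1) * (γ + K + 1) / ((K + 2) * (γ + K))

variable {α β γ z : ℝ}

lemma term_nonneg (hα : 0 ≤ α) (hβ : 0 < β) (hγ : 0 < γ) (hz : 0 ≤ z) (m : ℕ) :
    0 ≤ term α β γ z m := by
  unfold term
  positivity

lemma genMittagLefflerRem_eq_tsum (α β γ z : ℝ) (n : ℕ) :
    genMittagLefflerRem α β γ n z = ∑' k, term α β γ z (n + 1 + k) := by
  simp [genMittagLefflerRem, term]

lemma term_succ (hα : 0 ≤ α) (hβ : 0 < β) (hγ : 0 < γ) (m : ℕ) :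
    term α β γ z (m + 1) =
      (γ + m) / (m + 1) * z * (Gamma (α * m + β) / Gamma (α * m + β + α)) * term α β γ z m := by
  unfold term
  push_cast
  rw [← add_assoc, Gamma_add_one (by positivity), mul_add_one, add_right_comm _ α,
    Nat.factorial_succ]
  push_cast
  field_simp
  ring

lemma summable_term (hα : 0 < α) (hβ : 0 < β) (hγ : 0 < γ) (z : ℝ) :
    Summable (term α β γ z) := by
  have hx : Tendsto (fun m : ℕ => α * m + β) atTop atTop :=
    tendsto_atTop_add_const_right _ β
      ((tendsto_const_mul_atTop_of_pos hα).2 tendsto_natCast_atTop_atTop)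
  have hratio : Tendsto (fun m : ℕ => (γ + 1) * |z| * (Gamma (α * m + β) / Gamma (α * m + β + α)))
      atTop (𝓝 0) := by
    simpa using ((tendsto_Gamma_div_Gamma_add_atTop hα).comp hx).const_mul ((γ + 1) * |z|)
  refine summable_of_ratio_norm_eventually_le one_half_lt_one ?_
  filter_upwards [hratio.eventually (ge_mem_nhds one_half_pos)] with m hm
  have hcoeff : (γ + m) / (m + 1) ≤ γ + 1 := by
    rw [div_le_iff₀ (by positivity)]
    nlinarith [m.cast_nonneg (α := ℝ)]
  rw [term_succ hα.le hβ hγ, norm_mul, norm_mul, norm_mul, Real.norm_eq_abs z,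
    Real.norm_of_nonneg (by positivity : 0 ≤ (γ + m) / (m + 1)),
    Real.norm_of_nonneg (by positivity : 0 ≤ Gamma (α * m + β) / Gamma (α * m + β + α))]
  calc _ ≤ (γ + 1) * |z| * (Gamma (α * m + β) / Gamma (α * m + β + α)) * ‖term α β γ z m‖ := by
        gcongr
    _ ≤ 1 / 2 * ‖term α β γ z m‖ := by gcongr

lemma term_mul_term_add_two (hα : 0 ≤ α) (hβ : 0 < β) (hγ : 0 < γ) (K : ℕ) :
    term α β γ z K * term α β γ z (K + 2) =
      pochhammerTuranRatio γ K * gammaTuranRatio α (α * K + β) * term α β γ z (K + 1) ^ 2 := by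
  rw [term_succ hα hβ hγ (K + 1), term_succ hα hβ hγ K]
  unfold pochhammerTuranRatio gammaTuranRatio
  push_cast
  rw [mul_add_one α (K : ℝ), add_right_comm _ α, add_assoc (α * K + β) α α, ← two_mul,
    add_assoc γ (K : ℝ) 1]
  field_simp
  ring

lemma le_pochhammerTuranRatio (hγ : 0 < γ) {n K : ℕ} (hnK : n + 1 ≤ K) :
    (n + 1) * (γ + n + 2) / ((n + 2) * (γ + n + 1)) ≤ pochhammerTuranRatio γ K := by
  have hK : (n : ℝ) + 1 ≤ K := by exact_mod_cast hnK
  have hprod : (n + 2) * (γ + n + 1) ≤ ((K : ℝ) + 2) * (γ + K) :=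
    mul_le_mul (by linarith) (by linarith) (by positivity) (by positivity)
  unfold pochhammerTuranRatio
  rw [div_le_div_iff₀ (by positivity) (by positivity)]
  nlinarith [mul_le_mul_of_nonneg_left hprod hγ.le]

lemma turan_term (hα : 0 ≤ α) (hβ : 0 < β) (hγ : 0 < γ) {n K : ℕ}
    (hnK : n + 1 ≤ K) :
    (n + 1) * (γ + n + 2) / ((n + 2) * (γ + n + 1)) * gammaTuranRatio α (α * (n + 1) + β) *
        term α β γ z (K + 1) ^ 2 ≤ term α β γ z K * term α β γ z (K + 2) := by
  rw [term_mul_term_add_two hα hβ hγ]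
  have hgamma : gammaTuranRatio α (α * (n + 1) + β) ≤ gammaTuranRatio α (α * K + β) := by
    exact_mod_cast monotone_gammaTuranRatio_nat hα hβ hnK
  have hpos : 0 ≤ gammaTuranRatio α (α * (n + 1) + β) := by
    unfold gammaTuranRatio
    positivity
  have hpoch : 0 ≤ pochhammerTuranRatio γ K := by
    unfold pochhammerTuranRatio
    positivity
  gcongr
  exact le_pochhammerTuranRatio hγ hnK

end GenMittagLeffler

open GenMittagLeffler in
/-- Sharp Turán type inequality for remainders of the generalized
Mittag-Leffler series. -/
theorem genMittagLefflerRem_turan_sharp (α β γ : ℝ) (hα : 0 < α) (hβ : 0 < β)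
    (hγ : 0 < γ) (n : ℕ) :
    ∀ z : ℝ, 0 < z →
      ((n + 1) * (γ + n + 2)) / ((n + 2) * (γ + n + 1)) *
          ((Real.Gamma (β + α * (n + 2))) ^ 2 /
            (Real.Gamma (β + α * (n + 1)) * Real.Gamma (β + α * (n + 3)))) *
          (genMittagLefflerRem α β γ (n + 1) z) ^ 2 ≤
        genMittagLefflerRem α β γ n z * genMittagLefflerRem α β γ (n + 2) z := by
  intro z hz
  rw [show Real.Gamma (β + α * (n + 2)) ^ 2 /
      (Real.Gamma (β + α * (n + 1)) * Real.Gamma (β + α * (n + 3))) =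
      Real.gammaTuranRatio α (α * (n + 1) + β) by unfold Real.gammaTuranRatio; ring_nf]
  set C := (n + 1) * (γ + n + 2) / ((n + 2) * (γ + n + 1)) *
    Real.gammaTuranRatio α (α * (n + 1) + β)
  have hC0 : 0 ≤ C := by
    unfold C Real.gammaTuranRatio
    positivity
  have hT : ∀ m, 0 ≤ term α β γ z m := term_nonneg hα.le hβ hγ hz.le
  have hTs : ∀ c, Summable fun k => term α β γ z (c + k) := fun c =>
    (summable_nat_add_iff c).2 (summable_term hα hβ hγ z) |>.congr fun k => by rw [add_comm]
  have hturan : ∀ k, (√C * term α β γ z (n + 1 + 1 + k)) ^ 2 ≤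
      term α β γ z (n + 1 + k) * term α β γ z (n + 2 + 1 + k) := fun k => by
    rw [mul_pow, Real.sq_sqrt hC0, show n + 1 + 1 + k = n + 1 + k + 1 by omega,
      show n + 2 + 1 + k = n + 1 + k + 2 by omega]
    exact turan_term hα.le hβ hγ (Nat.le_add_right _ _)
  have hCS := tsum_sq_le_tsum_mul_tsum_of_sq_le_mul (fun _ => hT _) (fun _ => hT _) (hTs _) (hTs _)
    hturan
  rwa [tsum_mul_left, mul_pow, Real.sq_sqrt hC0, ← genMittagLefflerRem_eq_tsum,
    ← genMittagLefflerRem_eq_tsum, ← genMittagLefflerRem_eq_tsum] at hCS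
end
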